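/- Let g = ℂh ⊕ ℂx ⊕ ℂy be the Heisenberg Lie bialgebra with [x,y] = h, δ_g(h) = 0, δ_g(x) = y∧h, δ_g(y) = h∧x. If (α, D, A, B) is a flag datum of g, then α = 0 and A ∈ ℂh. More precisely: δ_g(A) = 0 forces A = kh for some k ∈ ℂ; the condition [a,A] = Σα(a₂)a₁ for all a then forces α(h) = α(x) = α(y) = 0. -/
import Mathlib


open TensorProduct LinearMap

noncomputable section

/-- The flip `A ⊗ B → B ⊗ A`. -/
def flipT (k A B : Type*) [Field k] [AddCommGroup A] [Module k A]
    [AddCommGroup B] [Module k B] : A ⊗[k] B →ₗ[k] B ⊗[k] A :=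
  (TensorProduct.comm k A B).toLinearMap

/-- Swap of the first two tensor factors `A ⊗ (B ⊗ C) → B ⊗ (A ⊗ C)`. -/
def swap12 (k A B C : Type*) [Field k] [AddCommGroup A] [Module k A]
    [AddCommGroup B] [Module k B] [AddCommGroup C] [Module k C] :
    A ⊗[k] (B ⊗[k] C) →ₗ[k] B ⊗[k] (A ⊗[k] C) :=
  (TensorProduct.assoc k B A C).toLinearMap ∘ₗ
    rTensor C (flipT k A B) ∘ₗ (TensorProduct.assoc k A B C).symm.toLinearMap

/-- Associator as a linear map. -/
def asr (k A B C : Type*) [Field k] [AddCommGroup A] [Module k A]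
    [AddCommGroup B] [Module k B] [AddCommGroup C] [Module k C] :
    (A ⊗[k] B) ⊗[k] C →ₗ[k] A ⊗[k] (B ⊗[k] C) :=
  (TensorProduct.assoc k A B C).toLinearMap

/-- `δ : M → M ⊗ M` is a Lie coalgebra structure: anti-cocommutativity and co-Jacobi. -/
def IsLieCoalgebra {k M : Type*} [Field k] [AddCommGroup M] [Module k M]
    (δ : M →ₗ[k] M ⊗[k] M) : Prop :=
  (∀ m, flipT k M M (δ m) = - δ m) ∧
  (∀ m, lTensor M δ (δ m) - swap12 k M M M (lTensor M δ (δ m)) =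
      asr k M M M (rTensor M δ (δ m)))

/-- A (bilinear) map `b` is a Lie bracket: alternating and Jacobi (in Leibniz form). -/
def IsLieBracket {k L : Type*} [Field k] [AddCommGroup L] [Module k L]
    (b : L →ₗ[k] L →ₗ[k] L) : Prop :=
  (∀ a, b a a = 0) ∧ (∀ a c d, b a (b c d) = b (b a c) d + b c (b a d))

/-- The adjoint action of `a` on `L ⊗ L`: `a.(Σ b₁⊗b₂) = Σ [a,b₁]⊗b₂ + b₁⊗[a,b₂]`. -/
def adT {k L : Type*} [Field k] [AddCommGroup L] [Module k L]
    (b : L →ₗ[k] L →ₗ[k] L) (a : L) : L ⊗[k] L →ₗ[k] L ⊗[k] L :=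
  rTensor L (b a) + lTensor L (b a)

/-- `(L, b, δ)` is a Lie bialgebra. -/
def IsLieBialgebra {k L : Type*} [Field k] [AddCommGroup L] [Module k L]
    (b : L →ₗ[k] L →ₗ[k] L) (δ : L →ₗ[k] L ⊗[k] L) : Prop :=
  IsLieBracket b ∧ IsLieCoalgebra δ ∧
    ∀ a c, δ (b a c) = adT b a (δ c) - adT b c (δ a)

variable {k g V : Type*} [Field k] [CharZero k]
  [AddCommGroup g] [Module k g] [AddCommGroup V] [Module k V]

/-- The unified co-product map on `E = g ⊕ V`:
`δ_E(a + x) = δ_g(a) + Δ_E(x) − τΔ_E(x) + Δ_V(x) + δ_V(x)`. -/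
def uniCoprod (δg : g →ₗ[k] g ⊗[k] g) (ΔE : V →ₗ[k] g ⊗[k] V)
    (ΔV : V →ₗ[k] g ⊗[k] g) (δV : V →ₗ[k] V ⊗[k] V) :
    (g × V) →ₗ[k] (g × V) ⊗[k] (g × V) :=
  map (inl k g V) (inl k g V) ∘ₗ δg ∘ₗ fst k g V +
    (map (inl k g V) (inr k g V) ∘ₗ ΔE
      - map (inr k g V) (inl k g V) ∘ₗ flipT k g V ∘ₗ ΔE
      + map (inl k g V) (inl k g V) ∘ₗ ΔV
      + map (inr k g V) (inr k g V) ∘ₗ δV) ∘ₗ snd k g V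

/-- Conditions (CLE1)–(CLE5): `(Δ_E, Δ_V, δ_V)` is a Lie coalgebraic extending
structure of `(g, δ_g)` by `V`. -/
def IsCoalgExtStructure (δg : g →ₗ[k] g ⊗[k] g) (ΔE : V →ₗ[k] g ⊗[k] V)
    (ΔV : V →ₗ[k] g ⊗[k] g) (δV : V →ₗ[k] V ⊗[k] V) : Prop :=
  -- (CLE1)
  (∀ x, flipT k g g (ΔV x) = - ΔV x) ∧ (∀ x, flipT k V V (δV x) = - δV x) ∧
  -- (CLE2)
  (∀ x, lTensor g ΔV (ΔE x) + lTensor g δg (ΔV x)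
      - swap12 k g g g (lTensor g ΔV (ΔE x)) - swap12 k g g g (lTensor g δg (ΔV x)) =
      - asr k g g g (rTensor g ΔV (flipT k g V (ΔE x)))
      + asr k g g g (rTensor g δg (ΔV x))) ∧
  -- (CLE3)
  (∀ x, lTensor g ΔE (ΔE x) - swap12 k g g V (lTensor g ΔE (ΔE x)) =
      asr k g g V (rTensor V δg (ΔE x)) + asr k g g V (rTensor V ΔV (δV x))) ∧
  -- (CLE4)
  (∀ x, lTensor g δV (ΔE x) - swap12 k V g V (lTensor V ΔE (δV x)) =
      asr k g V V (rTensor V ΔE (δV x))) ∧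
  -- (CLE5)
  (∀ x, lTensor V δV (δV x) - swap12 k V V V (lTensor V δV (δV x)) =
      asr k V V V (rTensor V δV (δV x)))

end
noncomputable section
variable {k g : Type*} [Field k] [CharZero k] [AddCommGroup g] [Module k g]

/-- A flag datum `(α, D, A, B)` of the Lie bialgebra `(g, [·,·], δ_g)`. -/
def IsFlagDatum (gbr : g →ₗ[k] g →ₗ[k] g) (δg : g →ₗ[k] g ⊗[k] g)
    (α : g →ₗ[k] k) (D : g →ₗ[k] g) (A : g) (B : g ⊗[k] g) : Prop :=
  -- B ∈ g ∧ g
  flipT k g g B = - B ∧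
  -- (1)
  (∀ a b, α (gbr a b) = 0) ∧ δg A = 0 ∧
  (∀ a, gbr a A = TensorProduct.rid k g (lTensor g α (δg a))) ∧
  -- (2)
  (∀ a b, D (gbr a b) = gbr (D a) b + gbr a (D b) + α a • D b - α b • D a) ∧
  -- (3)
  (A ⊗ₜ[k] B - swap12 k g g g (A ⊗ₜ[k] B) + asr k g g g (B ⊗ₜ[k] A)
      + lTensor g δg B - swap12 k g g g (lTensor g δg B)
      - asr k g g g (rTensor g δg B) = 0) ∧
  -- (4)
  (∀ a, D a ⊗ₜ[k] A - A ⊗ₜ[k] D a + α a • B + adT gbr a B + δg (D a)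
      - rTensor g D (δg a) - lTensor g D (δg a) = 0)

/-- Equivalence of flag datums: `α = α'`, `A = A'`, and there are `U ∈ g`,
`β ∈ k*` with `D(a) = [U,a] + βD'(a) − α(a)U` and
`B = δ_g(U) + βB' + U⊗A − A⊗U`. -/
def FlagEquiv (gbr : g →ₗ[k] g →ₗ[k] g) (δg : g →ₗ[k] g ⊗[k] g)
    (α : g →ₗ[k] k) (D : g →ₗ[k] g) (A : g) (B : g ⊗[k] g)
    (α' : g →ₗ[k] k) (D' : g →ₗ[k] g) (A' : g) (B' : g ⊗[k] g) : Prop :=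
  α = α' ∧ A = A' ∧ ∃ (U : g) (β : k), β ≠ 0 ∧
    (∀ a, D a = gbr U a + β • D' a - α a • U) ∧
    B = δg U + β • B' + U ⊗ₜ[k] A - A ⊗ₜ[k] U

end
noncomputable section

/-- The 3-dimensional Heisenberg Lie algebra, as `ℂ³` with coordinates the
coefficients of the basis `(x, y, h)`. -/
abbrev Heis : Type := ℂ × ℂ × ℂ

namespace Heis

def X : Heis := (1, 0, 0)
def Y : Heis := (0, 1, 0)
def H : Heis := (0, 0, 1)

/-- The Heisenberg bracket: `[x,y] = h`, `[h,x] = [h,y] = 0`. -/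
def hbr : Heis →ₗ[ℂ] Heis →ₗ[ℂ] Heis :=
  LinearMap.mk₂ ℂ (fun p q => (0, 0, p.1 * q.2.1 - p.2.1 * q.1))
    (by intros; simp [Prod.ext_iff]; ring)
    (by intros; simp [Prod.ext_iff]; ring)
    (by intros; simp [Prod.ext_iff]; ring)
    (by intros; simp [Prod.ext_iff]; ring)

/-- First coordinate (coefficient of `x`). -/
def c₁ : Heis →ₗ[ℂ] ℂ := LinearMap.fst ℂ ℂ (ℂ × ℂ)
/-- Second coordinate (coefficient of `y`). -/
def c₂ : Heis →ₗ[ℂ] ℂ := LinearMap.fst ℂ ℂ ℂ ∘ₗ LinearMap.snd ℂ ℂ (ℂ × ℂ)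
/-- Third coordinate (coefficient of `h`). -/
def c₃ : Heis →ₗ[ℂ] ℂ := LinearMap.snd ℂ ℂ ℂ ∘ₗ LinearMap.snd ℂ ℂ (ℂ × ℂ)

/-- The co-bracket: `δ(h) = 0`, `δ(x) = y∧h`, `δ(y) = h∧x`,
where `u∧v = u⊗v − v⊗u`. -/
def hδ : Heis →ₗ[ℂ] Heis ⊗[ℂ] Heis :=
  c₁.smulRight (Y ⊗ₜ[ℂ] H - H ⊗ₜ[ℂ] Y) + c₂.smulRight (H ⊗ₜ[ℂ] X - X ⊗ₜ[ℂ] H)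

end Heis
end
noncomputable section

/-- **Lemma.** For the Heisenberg Lie bialgebra, every flag datum `(α, D, A, B)`
has `α = 0` and `A ∈ ℂh`. -/
theorem heisenberg_flagDatum_alpha_A
    (α : Heis →ₗ[ℂ] ℂ) (D : Heis →ₗ[ℂ] Heis) (A : Heis) (B : Heis ⊗[ℂ] Heis)
    (hfd : IsFlagDatum Heis.hbr Heis.hδ α D A B) :
    α = 0 ∧ ∃ c : ℂ, A = c • Heis.H := by
  obtain ⟨-, -, hδA, h4, -, -, -⟩ := hfd
  have hA1 : A.1 = 0 := by
    have := congrArg (TensorProduct.lift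
      (((LinearMap.mul ℂ ℂ).comp Heis.c₂).compl₂ Heis.c₃)) hδA
    simpa [Heis.hδ, Heis.c₁, Heis.c₂, Heis.c₃, Heis.X, Heis.Y, Heis.H] using this
  have hA2 : A.2.1 = 0 := by
    have := congrArg (TensorProduct.lift
      (((LinearMap.mul ℂ ℂ).comp Heis.c₃).compl₂ Heis.c₁)) hδA
    simpa [Heis.hδ, Heis.c₁, Heis.c₂, Heis.c₃, Heis.X, Heis.Y, Heis.H] using this
  have hx := h4 Heis.X
  have hy := h4 Heis.Y
  simp [Heis.hbr, Heis.hδ, Heis.c₁, Heis.c₂, Heis.c₃, Heis.X, Heis.Y, Heis.H,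
    hA1, hA2, Prod.ext_iff] at hx hy
  obtain ⟨hαH, hαY⟩ := hx
  refine ⟨?_, A.2.2, ?_⟩
  · refine LinearMap.ext fun a => ?_
    have hrep : a = a.1 • Heis.X + a.2.1 • Heis.Y + a.2.2 • Heis.H := by
      simp [Heis.X, Heis.Y, Heis.H, Prod.ext_iff]
    have hX : α Heis.X = 0 := hy.2.symm
    have hY : α Heis.Y = 0 := hαY
    have hH : α Heis.H = 0 := hy.1
    rw [hrep]
    simp [hX, hY, hH]
  · simp [Heis.H, Prod.ext_iff, hA1, hA2]

end
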